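/- Let H be a complex Hilbert space, and let L_0, L_k : H → H be bounded linear operators such that L_k is self-adjoint, L_0 is coercive (Re⟨L_0 u, u⟩ ≥ c‖u‖² for some c > 0), and L_k - L_0 is compact. If additionally ⟨L_k u, u⟩ > 0 for all u ≠ 0 in H, then L_k is injective; and if there exists a finite-dimensional subspace V ⊂ H with ⟨L_k u, u⟩ ≤ 0 for all u ∈ V, and the family t ↦ L_t is norm-continuous on an interval [k_0, k] with ⟨L_{k_0} u, u⟩ > 0 for all u ≠ 0, then there exists t ∈ [k_0, k] such that L_t has nontrivial kernel. -/

import Mathlib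

/-!
The function `m t = ⨅ ‖u‖ = 1, re ⟪L t u, u⟫` is `1`-Lipschitz in the operator `L t`, hence
continuous in `t`. It is nonnegative at `k₀` and nonpositive at `k` (test it on a unit vector of
`V`), so it vanishes at some `t ∈ [k₀, k]`. There `L t` is a positive operator with unit vectors
`u n` such that `⟪L t (u n), u n⟫ → 0`; Cauchy–Schwarz for the semi-inner product `⟪L t ·, ·⟫`
gives `‖L t u‖ ^ 2 ≤ ‖L t‖ * re ⟪L t u, u⟫`, so `L t (u n) → 0`. Since `L 0` is bounded below
by coercivity and `L t - L 0` is compact, a subsequence of `u n` converges, and its limit is a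
unit vector in the kernel of `L t`.
-/

open scoped InnerProductSpace

open Filter Topology RCLike

open scoped NNReal

section

variable {𝕜 E F : Type*} [NontriviallyNormedField 𝕜] [NormedAddCommGroup E] [NormedSpace 𝕜 E]
  [CompleteSpace E] [NormedAddCommGroup F] [NormedSpace 𝕜 F]

theorem exists_ne_zero_apply_eq_zero_of_tendsto_zero {T T₀ : E →L[𝕜] F} {K : ℝ≥0}
    (hT₀ : AntilipschitzWith K T₀) (hcomp : IsCompactOperator (T - T₀)) {u : ℕ → E}
    (hu : ∀ n, ‖u n‖ = 1) (hTu : Tendsto (fun n => T (u n)) atTop (𝓝 0)) :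
    ∃ x, x ≠ 0 ∧ T x = 0 := by
  obtain ⟨C, hC, hsub⟩ :=
    IsCompactOperator.image_closedBall_subset_compact (f := (T - T₀).toLinearMap) hcomp 1
  obtain ⟨w, -, φ, hφ, hw⟩ := hC.tendsto_subseq fun n =>
    hsub ⟨u n, mem_closedBall_zero_iff.2 (hu n).le, rfl⟩
  have hT₀u : Tendsto (fun n => T₀ (u (φ n))) atTop (𝓝 (0 - w)) := by
    simpa using (hTu.comp hφ.tendsto_atTop).sub hw
  have hcauchy : CauchySeq (fun n => u (φ n)) :=
    (hT₀.isUniformInducing T₀.uniformContinuous).cauchy_map_iff.1 hT₀u.cauchySeq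
  obtain ⟨x, hx⟩ := cauchySeq_tendsto_of_complete hcauchy
  refine ⟨x, ?_,
    tendsto_nhds_unique ((T.continuous.tendsto x).comp hx) (hTu.comp hφ.tendsto_atTop)⟩
  have hnorm : ‖x‖ = 1 := tendsto_nhds_unique hx.norm (by simp [hu])
  exact ne_zero_of_norm_ne_zero (by simp [hnorm])

end

namespace ContinuousLinearMap

variable {𝕜 E : Type*} [RCLike 𝕜] [NormedAddCommGroup E] [InnerProductSpace 𝕜 E]

theorem abs_reApplyInnerSelf_le (T : E →L[𝕜] E) (x : E) :
    |T.reApplyInnerSelf x| ≤ ‖T‖ * ‖x‖ ^ 2 :=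
  calc |T.reApplyInnerSelf x| ≤ ‖⟪T x, x⟫_𝕜‖ := abs_re_le_norm _
    _ ≤ ‖T x‖ * ‖x‖ := norm_inner_le_norm _ _
    _ ≤ ‖T‖ * ‖x‖ * ‖x‖ := by gcongr; exact T.le_opNorm x
    _ = ‖T‖ * ‖x‖ ^ 2 := by ring

theorem IsPositive.norm_inner_mul_norm_inner_le {T : E →L[𝕜] E} (hT : T.IsPositive) (x y : E) :
    ‖⟪T x, y⟫_𝕜‖ * ‖⟪T y, x⟫_𝕜‖ ≤ T.reApplyInnerSelf x * T.reApplyInnerSelf y :=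
  @InnerProductSpace.Core.inner_mul_inner_self_le 𝕜 E _ _ _
    { inner x y := ⟪T x, y⟫_𝕜
      conj_inner_symm x y := by rw [inner_conj_symm, hT.inner_left_eq_inner_right]
      re_inner_nonneg := hT.re_inner_nonneg_left
      add_left x y z := by simp only [map_add, inner_add_left]
      smul_left x y r := by simp only [map_smul, inner_smul_left] } x y

theorem IsPositive.norm_apply_sq_le {T : E →L[𝕜] E} (hT : T.IsPositive) (x : E) :
    ‖T x‖ ^ 2 ≤ ‖T‖ * T.reApplyInnerSelf x := by
  rcases eq_or_ne (T x) 0 with hx | hx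
  · rw [hx, norm_zero, sq, zero_mul]
    exact mul_nonneg (norm_nonneg T) (hT.re_inner_nonneg_left x)
  have hcs := hT.norm_inner_mul_norm_inner_le x (T x)
  rw [inner_self_eq_norm_sq_to_K, hT.inner_left_eq_inner_right (T x),
    inner_self_eq_norm_sq_to_K] at hcs
  have hTTx : T.reApplyInnerSelf (T x) ≤ ‖T‖ * ‖T x‖ ^ 2 :=
    (le_abs_self _).trans (T.abs_reApplyInnerSelf_le _)
  simp only [norm_pow, norm_ofReal, abs_norm] at hcs
  refine le_of_mul_le_mul_right ?_ (by positivity : 0 < ‖T x‖ ^ 2)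
  calc ‖T x‖ ^ 2 * ‖T x‖ ^ 2 ≤ T.reApplyInnerSelf x * T.reApplyInnerSelf (T x) := hcs
    _ ≤ T.reApplyInnerSelf x * (‖T‖ * ‖T x‖ ^ 2) := by
      gcongr
      exact hT.re_inner_nonneg_left x
    _ = ‖T‖ * T.reApplyInnerSelf x * ‖T x‖ ^ 2 := by ring

theorem IsPositive.tendsto_apply_zero {T : E →L[𝕜] E} (hT : T.IsPositive) {ι : Type*}
    {l : Filter ι} {u : ι → E} (hu : Tendsto (fun i => T.reApplyInnerSelf (u i)) l (𝓝 0)) :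
    Tendsto (fun i => T (u i)) l (𝓝 0) := by
  have hsq : Tendsto (fun i => ‖T (u i)‖ ^ 2) l (𝓝 0) :=
    squeeze_zero (fun _ => by positivity) (fun i => hT.norm_apply_sq_le (u i))
      (by simpa using hu.const_mul ‖T‖)
  rw [tendsto_zero_iff_norm_tendsto_zero]
  simpa [Real.sqrt_sq (norm_nonneg _)] using hsq.sqrt

theorem antilipschitz_of_coercive {T : E →L[𝕜] E} {c : ℝ} (hc : 0 < c)
    (hT : ∀ x, c * ‖x‖ ^ 2 ≤ T.reApplyInnerSelf x) : AntilipschitzWith (Real.toNNReal c⁻¹) T := by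
  refine T.antilipschitz_of_bound fun x => ?_
  rw [Real.coe_toNNReal _ (inv_pos.2 hc).le, inv_mul_eq_div, le_div_iff₀' hc]
  rcases eq_or_ne x 0 with rfl | hx
  · simp
  refine le_of_mul_le_mul_right ?_ (norm_pos_iff.2 hx)
  calc c * ‖x‖ * ‖x‖ = c * ‖x‖ ^ 2 := by ring
    _ ≤ T.reApplyInnerSelf x := hT x
    _ ≤ ‖T x‖ * ‖x‖ := (re_le_norm _).trans (norm_inner_le_norm _ _)

/-- On the zero space this is the junk value `0` of an empty infimum. -/
noncomputable def sphereInf (T : E →L[𝕜] E) : ℝ :=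
  ⨅ x : Metric.sphere (0 : E) 1, T.reApplyInnerSelf x

theorem sphereInf_le (T : E →L[𝕜] E) {x : E} (hx : ‖x‖ = 1) :
    T.sphereInf ≤ T.reApplyInnerSelf x := by
  refine ciInf_le ⟨-‖T‖, ?_⟩ (⟨x, mem_sphere_zero_iff_norm.2 hx⟩ : Metric.sphere (0 : E) 1)
  rintro _ ⟨⟨y, hy⟩, rfl⟩
  have := T.abs_reApplyInnerSelf_le y
  rw [mem_sphere_zero_iff_norm.1 hy, one_pow, mul_one] at this
  exact neg_le_of_abs_le this

theorem reApplyInnerSelf_nonneg_of_sphereInf_nonneg {T : E →L[𝕜] E} (h : 0 ≤ T.sphereInf)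
    (x : E) : 0 ≤ T.reApplyInnerSelf x := by
  rcases eq_or_ne x 0 with rfl | hx
  · simp [reApplyInnerSelf_apply]
  have := h.trans (T.sphereInf_le (norm_smul_inv_norm (𝕜 := 𝕜) hx))
  rw [reApplyInnerSelf_smul] at this
  exact nonneg_of_mul_nonneg_right this (by simp [hx])

variable [Nontrivial E]

instance nonempty_sphere_one : Nonempty (Metric.sphere (0 : E) 1) :=
  let ⟨x, hx⟩ := exists_ne (0 : E)
  ⟨⟨(‖x‖⁻¹ : 𝕜) • x, mem_sphere_zero_iff_norm.2 (norm_smul_inv_norm hx)⟩⟩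

theorem le_sphereInf (T : E →L[𝕜] E) {a : ℝ} (h : ∀ x, ‖x‖ = 1 → a ≤ T.reApplyInnerSelf x) :
    a ≤ T.sphereInf :=
  le_ciInf fun x => h x (mem_sphere_zero_iff_norm.1 x.2)

theorem exists_reApplyInnerSelf_lt_of_sphereInf_lt (T : E →L[𝕜] E) {a : ℝ}
    (h : T.sphereInf < a) : ∃ x, ‖x‖ = 1 ∧ T.reApplyInnerSelf x < a :=
  let ⟨x, hx⟩ := exists_lt_of_ciInf_lt h
  ⟨x, mem_sphere_zero_iff_norm.1 x.2, hx⟩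

theorem lipschitzWith_sphereInf : LipschitzWith 1 (sphereInf : (E →L[𝕜] E) → ℝ) := by
  refine LipschitzWith.of_le_add fun T S => ?_
  rw [← sub_le_iff_le_add, dist_eq_norm]
  refine le_sphereInf S fun x hx => ?_
  have hTS := (T - S).abs_reApplyInnerSelf_le x
  rw [hx, one_pow, mul_one] at hTS
  have : (T - S).reApplyInnerSelf x = T.reApplyInnerSelf x - S.reApplyInnerSelf x := by
    simp only [reApplyInnerSelf_apply, sub_apply, inner_sub_left, map_sub]
  linarith [T.sphereInf_le hx, le_abs_self ((T - S).reApplyInnerSelf x)]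

theorem exists_ne_zero_apply_eq_zero_of_sphereInf_eq_zero [CompleteSpace E]
    {T T₀ : E →L[𝕜] E} {K : ℝ≥0} (hT : IsSelfAdjoint T) (hT₀ : AntilipschitzWith K T₀)
    (hcomp : IsCompactOperator (T - T₀)) (h : T.sphereInf = 0) : ∃ x, x ≠ 0 ∧ T x = 0 := by
  have hpos : T.IsPositive := ⟨hT.isSymmetric, reApplyInnerSelf_nonneg_of_sphereInf_nonneg h.ge⟩
  choose u hu hlt using fun n : ℕ =>
    T.exists_reApplyInnerSelf_lt_of_sphereInf_lt (h ▸ Nat.one_div_pos_of_nat (n := n))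
  have hQ : Tendsto (fun n => T.reApplyInnerSelf (u n)) atTop (𝓝 0) :=
    squeeze_zero (fun n => hpos.2 _) (fun n => (hlt n).le) tendsto_one_div_add_atTop_nhds_zero_nat
  exact exists_ne_zero_apply_eq_zero_of_tendsto_zero hT₀ hcomp hu (hpos.tendsto_apply_zero hQ)

end ContinuousLinearMap

/-- abstract eigenvalue-existence principle. Let `L : ℝ → (H →L H)` be a family
of bounded operators on a complex Hilbert space with `L k` self-adjoint, `L 0` coercive and
`L k - L 0` compact for each `k`. If `⟪L k u, u⟫ > 0` for all `u ≠ 0`, then `L k` is injective;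
and if there is a finite-dimensional subspace `V` with `Re ⟪L k u, u⟫ ≤ 0` on `V`, the family
is norm-continuous on `[k₀, k]` and `L k₀` is positive, then some `L t`, `t ∈ [k₀, k]`,
has nontrivial kernel. -/
theorem abstract_transmission_eigenvalue_existence
    {H : Type*} [NormedAddCommGroup H] [InnerProductSpace ℂ H] [CompleteSpace H]
    (L : ℝ → H →L[ℂ] H) (k k₀ : ℝ) (hk₀k : k₀ ≤ k)
    (hsa : ∀ t : ℝ, IsSelfAdjoint (L t))
    (c : ℝ) (hc : 0 < c) (hcoer : ∀ u : H, c * ‖u‖ ^ 2 ≤ (⟪L 0 u, u⟫_ℂ).re)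
    (hcomp : ∀ t : ℝ, IsCompactOperator (L t - L 0)) :
    ((∀ u : H, u ≠ 0 → 0 < (⟪L k u, u⟫_ℂ).re) → Function.Injective (L k)) ∧
    ((∃ V : Submodule ℂ H, FiniteDimensional ℂ V ∧ V ≠ ⊥ ∧
          ∀ u ∈ V, (⟪L k u, u⟫_ℂ).re ≤ 0) →
      (Continuous fun t : ℝ => L t) →
      (∀ u : H, u ≠ 0 → 0 < (⟪L k₀ u, u⟫_ℂ).re) →
      ∃ t ∈ Set.Icc k₀ k, ∃ u : H, u ≠ 0 ∧ L t u = 0) := by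
  refine ⟨fun hpos => (injective_iff_map_eq_zero _).2 fun u hu => ?_, ?_⟩
  · by_contra hne
    simpa [hu] using hpos u hne
  rintro ⟨V, -, hV, hVk⟩ hcont hpos₀
  obtain ⟨v, hvV, hv⟩ := Submodule.exists_mem_ne_zero_of_ne_bot hV
  have : Nontrivial H := nontrivial_of_ne v 0 hv
  have hker (t : ℝ) (ht : (L t).sphereInf = 0) : ∃ u, u ≠ 0 ∧ L t u = 0 :=
    (L t).exists_ne_zero_apply_eq_zero_of_sphereInf_eq_zero (hsa t)
      (ContinuousLinearMap.antilipschitz_of_coercive hc hcoer) (hcomp t) ht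
  have hk : (L k).sphereInf ≤ 0 :=
    ((L k).sphereInf_le (norm_smul_inv_norm hv)).trans (hVk _ (V.smul_mem _ hvV))
  have hk₀ : 0 ≤ (L k₀).sphereInf :=
    (L k₀).le_sphereInf fun u hu => (hpos₀ u (ne_zero_of_norm_ne_zero (by simp [hu]))).le
  obtain ⟨t, ht, hmt⟩ := intermediate_value_Icc' hk₀k
    (ContinuousLinearMap.lipschitzWith_sphereInf.continuous.comp hcont).continuousOn ⟨hk, hk₀⟩
  exact ⟨t, ht, hker t hmt⟩
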